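/- Let s = 2q with q ≥ 2 and equip the even dihedral system I₂(2q) with multiplicity values k₁ on the orbit of even-indexed reflections and k₂ on odd-indexed reflections. Then for m ≥ 1: if g is an even-indexed reflection (m odd) or an even rotation (m even), c_m(g) = (q^{m−1}/2)[(k₁+k₂)^m + (k₁−k₂)^m]; if g is an odd-indexed reflection (m odd) or an odd rotation (m even), c_m(g) = (q^{m−1}/2)[(k₁+k₂)^m − (k₁−k₂)^m]. -/

import Mathlib

/-!
Write `χ(a)` for the multiplicity of `sr a`, `S = k₁ + k₂`, `D = k₁ - k₂`, and let `ε` be the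
linear character of `D₂(2q)` that is `±1` on the reflection classes `𝒪₀, 𝒪₁`. Then
`χ(a) = (S + ε(sr a) D) / 2`, and `c_m` is supported on elements of determinant `(-1)^m`, where
`c_m(g) = q^{m-1}/2 (S^m + ε(g) D^m)`. This ansatz survives the recursion
`c_{m+1}(g) = ∑ₐ χ(a) c_m(sr a * g)` because `ε(sr a * g) = ε(sr a) ε(g)`, so only the two sums
`∑ₐ χ(a) = q S` and `∑ₐ χ(a) ε(sr a) = q D` are needed.
-/

attribute [local instance] Classical.propDecidable

/-- `c_m(g)` for the even dihedral group `D₂(2q)` with multiplicity `k₁` on the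
even-indexed reflections and `k₂` on the odd-indexed ones. -/
noncomputable def cdih2 (q : ℕ) [NeZero (2 * q)] (k₁ k₂ : ℂ) (m : ℕ)
    (g : DihedralGroup (2 * q)) : ℂ :=
  ∑ f : Fin m → ZMod (2 * q),
    if (List.ofFn fun i => DihedralGroup.sr (f i)).prod = g
    then (List.ofFn fun i => if Even (f i).val then k₁ else k₂).prod else 0

open Finset DihedralGroup

theorem Finset.sum_range_two_mul_ite_even {M : Type*} [AddCommMonoid M] (u v : M) (n : ℕ) :
    ∑ i ∈ range (2 * n), (if Even i then u else v) = n • (u + v) := by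
  induction n with
  | zero => simp
  | succ n ih =>
    rw [mul_add_one, sum_range_succ, sum_range_succ, ih, succ_nsmul, add_assoc]
    simp

namespace ZMod

variable {n : ℕ} [NeZero n] {R : Type*} [Ring R]

theorem sum_comp_val {M : Type*} [AddCommMonoid M] (f : ℕ → M) :
    ∑ a : ZMod n, f a.val = ∑ i ∈ range n, f i := by
  obtain ⟨k, rfl⟩ := Nat.exists_eq_succ_of_ne_zero (NeZero.ne n)
  exact Fin.sum_univ_eq_sum_range f _

theorem neg_one_pow_val_add (hn : 2 ∣ n) (a b : ZMod n) :
    (-1 : R) ^ (a + b).val = (-1) ^ a.val * (-1) ^ b.val := by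
  rw [← pow_add, neg_one_pow_eq_pow_mod_two, val_add, Nat.mod_mod_of_dvd _ hn,
    ← neg_one_pow_eq_pow_mod_two]

theorem neg_one_pow_val_sub (hn : 2 ∣ n) (a b : ZMod n) :
    (-1 : R) ^ (a - b).val = (-1) ^ a.val * (-1) ^ b.val := by
  have h := neg_one_pow_val_add (R := R) hn (a - b) b
  rw [sub_add_cancel] at h
  rw [h, mul_assoc, ← pow_add, Even.neg_one_pow ⟨_, rfl⟩, mul_one]

theorem sum_ite_even_val {M : Type*} [AddCommMonoid M] (q : ℕ) [NeZero (2 * q)] (u v : M) :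
    ∑ a : ZMod (2 * q), (if Even a.val then u else v) = q • (u + v) := by
  rw [sum_comp_val (fun i => if Even i then u else v), sum_range_two_mul_ite_even]

theorem sum_ite_even_val_mul_neg_one_pow (q : ℕ) [NeZero (2 * q)] (u v : R) :
    ∑ a : ZMod (2 * q), (if Even a.val then u else v) * (-1) ^ a.val = q • (u - v) := by
  have h (a : ZMod (2 * q)) :
      (if Even a.val then u else v) * (-1) ^ a.val = if Even a.val then u else -v := by
    split_ifs with ha
    · simp [ha.neg_one_pow]
    · simp [(Nat.not_even_iff_odd.mp ha).neg_one_pow]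
  simp only [h, sum_ite_even_val, sub_eq_add_neg]

end ZMod

namespace DihedralGroup

variable {n : ℕ}

def det : DihedralGroup n →* ℂ where
  toFun
    | r _ => 1
    | sr _ => -1
  map_one' := rfl
  map_mul' := by rintro (i | i) (j | j) <;> simp

/-- The character `ε`: on reflections it is `1` on `𝒪₀ = {sr (2j)}` and `-1` on `𝒪₁ = {sr (2j+1)}`.
-/
def parity [NeZero n] (hn : 2 ∣ n) : DihedralGroup n →* ℂ where
  toFun
    | r i => (-1) ^ i.val
    | sr i => (-1) ^ i.val
  map_one' := by simp [← r_zero]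
  map_mul' := by
    rintro (i | i) (j | j) <;>
      simp [ZMod.neg_one_pow_val_add hn, ZMod.neg_one_pow_val_sub hn, mul_comm]

@[simp] theorem det_r (i : ZMod n) : det (r i) = 1 := rfl

@[simp] theorem det_sr (i : ZMod n) : det (sr i) = -1 := rfl

@[simp] theorem parity_r [NeZero n] (hn : 2 ∣ n) (i : ZMod n) : parity hn (r i) = (-1) ^ i.val :=
  rfl

@[simp] theorem parity_sr [NeZero n] (hn : 2 ∣ n) (i : ZMod n) : parity hn (sr i) = (-1) ^ i.val :=
  rfl

end DihedralGroup

section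

variable (q : ℕ) [NeZero (2 * q)] (k₁ k₂ : ℂ)

theorem cdih2_zero (g : DihedralGroup (2 * q)) :
    cdih2 q k₁ k₂ 0 g = if g = 1 then 1 else 0 := by
  simp [cdih2, eq_comm]

theorem cdih2_succ (m : ℕ) (g : DihedralGroup (2 * q)) :
    cdih2 q k₁ k₂ (m + 1) g =
      ∑ a, (if Even a.val then k₁ else k₂) * cdih2 q k₁ k₂ m (sr a * g) := by
  simp only [cdih2, mul_sum, mul_ite, mul_zero]
  rw [← (Fin.consEquiv fun _ => ZMod (2 * q)).sum_comp, Fintype.sum_prod_type]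
  simp only [Fin.consEquiv_apply, List.ofFn_succ, Fin.cons_zero, Fin.cons_succ, List.prod_cons,
    ← eq_inv_mul_iff_mul_eq, inv_sr]

theorem cdih2_one (g : DihedralGroup (2 * q)) :
    cdih2 q k₁ k₂ 1 g = ∑ a, if sr a = g then (if Even a.val then k₁ else k₂) else 0 := by
  simp only [cdih2_succ, cdih2_zero, mul_ite, mul_one, mul_zero, mul_eq_one_iff_inv_eq, inv_sr]

theorem cdih2_of_det_eq_neg_one_pow {m : ℕ} (hm : 1 ≤ m) {g : DihedralGroup (2 * q)}
    (hg : det g = (-1) ^ m) :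
    cdih2 q k₁ k₂ m g =
      (q : ℂ) ^ (m - 1) / 2 * ((k₁ + k₂) ^ m + parity (Dvd.intro q rfl) g * (k₁ - k₂) ^ m) := by
  induction m, hm using Nat.le_induction generalizing g with
  | base =>
    rcases g with j | j
    · norm_num at hg
    · simp only [cdih2_one, sr.injEq, sum_ite_eq', mem_univ, if_true, parity_sr]
      rcases Nat.even_or_odd j.val with hj | hj
      · simp [hj, hj.neg_one_pow]; ring
      · simp [Nat.not_even_iff_odd.mpr hj, hj.neg_one_pow]; ring
  | succ m hm ih =>
    obtain ⟨n, rfl⟩ : ∃ n, m = n + 1 := ⟨m - 1, by omega⟩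
    set ε := parity (Dvd.intro q rfl) g
    have hterm (a : ZMod (2 * q)) : cdih2 q k₁ k₂ (n + 1) (sr a * g) =
        (q : ℂ) ^ n / 2 * ((k₁ + k₂) ^ (n + 1) + (-1) ^ a.val * ε * (k₁ - k₂) ^ (n + 1)) := by
      rw [ih (by rw [map_mul, hg, pow_succ, det_sr, mul_neg_one, neg_mul_neg, one_mul]),
        map_mul, parity_sr, Nat.add_sub_cancel]
    calc cdih2 q k₁ k₂ (n + 1 + 1) g
        = (q : ℂ) ^ n / 2 *
            ((k₁ + k₂) ^ (n + 1) * ∑ a : ZMod (2 * q), (if Even a.val then k₁ else k₂)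
              + ε * (k₁ - k₂) ^ (n + 1) *
                ∑ a : ZMod (2 * q), (if Even a.val then k₁ else k₂) * (-1) ^ a.val) := by
          rw [cdih2_succ]
          simp only [hterm, mul_sum, ← sum_add_distrib]
          exact sum_congr rfl fun a _ => by ring
      _ = _ := by
          rw [ZMod.sum_ite_even_val, ZMod.sum_ite_even_val_mul_neg_one_pow, nsmul_eq_mul,
            nsmul_eq_mul, Nat.add_sub_cancel]
          ring

end

theorem stmt11_general (q : ℕ) [NeZero (2 * q)] (k₁ k₂ : ℂ) (m : ℕ) (hm : 1 ≤ m)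
    (j : ZMod (2 * q)) :
    (Even j.val → Odd m →
      cdih2 q k₁ k₂ m (DihedralGroup.sr j)
        = (q : ℂ) ^ (m - 1) / 2 * ((k₁ + k₂) ^ m + (k₁ - k₂) ^ m)) ∧
    (Even j.val → Even m →
      cdih2 q k₁ k₂ m (DihedralGroup.r j)
        = (q : ℂ) ^ (m - 1) / 2 * ((k₁ + k₂) ^ m + (k₁ - k₂) ^ m)) ∧
    (Odd j.val → Odd m →
      cdih2 q k₁ k₂ m (DihedralGroup.sr j)
        = (q : ℂ) ^ (m - 1) / 2 * ((k₁ + k₂) ^ m - (k₁ - k₂) ^ m)) ∧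
    (Odd j.val → Even m →
      cdih2 q k₁ k₂ m (DihedralGroup.r j)
        = (q : ℂ) ^ (m - 1) / 2 * ((k₁ + k₂) ^ m - (k₁ - k₂) ^ m)) := by
  refine ⟨fun hj hm' => ?_, fun hj hm' => ?_, fun hj hm' => ?_, fun hj hm' => ?_⟩ <;>
    rw [cdih2_of_det_eq_neg_one_pow q k₁ k₂ hm (by simp [hm'.neg_one_pow])] <;>
    simp [hj.neg_one_pow, sub_eq_add_neg]

/-- In the even dihedral system `I₂(2q)` with multiplicities `k₁, k₂`: for `m ≥ 1`,
`c_m(g) = (q^{m−1}/2)[(k₁+k₂)^m + (k₁−k₂)^m]` when `g` is an even-indexed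
reflection (`m` odd) or an even rotation (`m` even), and
`c_m(g) = (q^{m−1}/2)[(k₁+k₂)^m − (k₁−k₂)^m]` when `g` is an odd-indexed
reflection (`m` odd) or an odd rotation (`m` even). -/
theorem stmt11 (q : ℕ) [NeZero (2 * q)] (hq : 2 ≤ q) (k₁ k₂ : ℂ) (m : ℕ) (hm : 1 ≤ m)
    (j : ZMod (2 * q)) :
    (Even j.val → Odd m →
      cdih2 q k₁ k₂ m (DihedralGroup.sr j)
        = (q : ℂ) ^ (m - 1) / 2 * ((k₁ + k₂) ^ m + (k₁ - k₂) ^ m)) ∧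
    (Even j.val → Even m →
      cdih2 q k₁ k₂ m (DihedralGroup.r j)
        = (q : ℂ) ^ (m - 1) / 2 * ((k₁ + k₂) ^ m + (k₁ - k₂) ^ m)) ∧
    (Odd j.val → Odd m →
      cdih2 q k₁ k₂ m (DihedralGroup.sr j)
        = (q : ℂ) ^ (m - 1) / 2 * ((k₁ + k₂) ^ m - (k₁ - k₂) ^ m)) ∧
    (Odd j.val → Even m →
      cdih2 q k₁ k₂ m (DihedralGroup.r j)
        = (q : ℂ) ^ (m - 1) / 2 * ((k₁ + k₂) ^ m - (k₁ - k₂) ^ m)) :=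
  stmt11_general q k₁ k₂ m hm j
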